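/- There is a ℂ-algebra isomorphism ℂ[y₁,y₂,y₃]/(3y₁²y₂ + y₃², y₁³ + 3y₂², y₁y₃) ≅ ℂ[z₁,z₂,z₃]/(12z₁²z₂ - z₃², z₁³ + 3z₂², z₁z₃), given by y₁ ↦ z₁, y₂ ↦ z₂, y₃ ↦ (i/2)·z₃. -/
import Mathlib

open MvPolynomial Complex

noncomputable section

set_option synthInstance.maxHeartbeats 400000
set_option maxHeartbeats 1000000

abbrev R3 : Type := MvPolynomial (Fin 3) ℂ

/-- The Jacobian ideal of the `Q₁₁` polynomial `x₁³x₂ + x₂³ + x₁x₃²`. -/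
def J7a : Ideal R3 :=
  Ideal.span {3 * X 0 ^ 2 * X 1 + X 2 ^ 2, X 0 ^ 3 + 3 * X 1 ^ 2, X 0 * X 2}

/-- Presentation of the orbifold Jacobian algebra `Jac(x₁⁶x₂+x₂³+x₃², ℤ/2ℤ)`. -/
def J7b : Ideal R3 :=
  Ideal.span {12 * X 0 ^ 2 * X 1 - X 2 ^ 2, X 0 ^ 3 + 3 * X 1 ^ 2, X 0 * X 2}

def sig : R3 →ₐ[ℂ] R3 := aeval ![X 0, X 1, C (I/2) * X 2]
def tau : R3 →ₐ[ℂ] R3 := aeval ![X 0, X 1, C (-2*I) * X 2]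

lemma sig_C (c : ℂ) : sig (C c) = C c := by simp [sig, algebraMap_eq]
lemma tau_C (c : ℂ) : tau (C c) = C c := by simp [tau, algebraMap_eq]

lemma sig_X0 : sig (X 0) = X 0 := by simp [sig]
lemma sig_X1 : sig (X 1) = X 1 := by simp [sig]
lemma sig_X2 : sig (X 2) = C (I/2) * X 2 := by simp [sig]
lemma tau_X0 : tau (X 0) = X 0 := by simp [tau]
lemma tau_X1 : tau (X 1) = X 1 := by simp [tau]
lemma tau_X2 : tau (X 2) = C (-2*I) * X 2 := by simp [tau]

lemma key1 : (-2*I)*(I/2 : ℂ) = 1 := by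
  rw [show (-2*I)*(I/2:ℂ) = -(I*I) from by ring, I_mul_I]; norm_num

lemma sig_tau_X2 : sig (tau (X 2)) = X 2 := by
  rw [tau_X2, map_mul, sig_X2, sig_C]
  rw [← mul_assoc, ← map_mul, key1, map_one, one_mul]

lemma tau_sig_X2 : tau (sig (X 2)) = X 2 := by
  rw [sig_X2, map_mul, tau_X2, tau_C]
  rw [← mul_assoc, ← map_mul, mul_comm (I/2 : ℂ), key1, map_one, one_mul]

lemma hfmem : J7a ≤ Ideal.comap sig.toRingHom J7b := by
  refine Ideal.span_le.mpr ?_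
  rintro p (rfl | rfl | rfl) <;> simp only [SetLike.mem_coe, Ideal.mem_comap,
    AlgHom.toRingHom_eq_coe, RingHom.coe_coe]
  · have h1 : (C ((4:ℂ)⁻¹) : R3) * 4 = 1 := by
      rw [show (4:R3) = C (4:ℂ) from (map_ofNat _ _).symm, ← map_mul]
      norm_num
    have h : sig (3 * X 0 ^ 2 * X 1 + X 2 ^ 2) =
        C ((4:ℂ)⁻¹) * (12 * X 0 ^ 2 * X 1 - X 2 ^ 2) := by
      rw [map_add, map_mul, map_mul, map_pow, map_pow, map_ofNat, sig_X0, sig_X1, sig_X2]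
      rw [mul_pow, ← map_pow, show ((I/2:ℂ))^2 = -(4:ℂ)⁻¹ from by
        rw [div_pow, I_sq]; norm_num, show (C (-(4:ℂ)⁻¹) : R3) = -C ((4:ℂ)⁻¹) from by
        rw [map_neg]]
      linear_combination (-(3 * X 0 ^ 2 * X 1) : R3) * h1
    rw [h]
    exact Ideal.mul_mem_left _ _ (Ideal.subset_span (by left; rfl))
  · have h : sig (X 0 ^ 3 + 3 * X 1 ^ 2) = X 0 ^ 3 + 3 * X 1 ^ 2 := by
      rw [map_add, map_mul, map_pow, map_pow, map_ofNat, sig_X0, sig_X1]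
    rw [h]; exact Ideal.subset_span (by right; left; rfl)
  · have h : sig (X 0 * X 2) = C (I/2) * (X 0 * X 2) := by
      rw [map_mul, sig_X0, sig_X2]; ring
    rw [h]
    exact Ideal.mul_mem_left _ _ (Ideal.subset_span (by right; right; rfl))

lemma hgmem : J7b ≤ Ideal.comap tau.toRingHom J7a := by
  refine Ideal.span_le.mpr ?_
  rintro p (rfl | rfl | rfl) <;> simp only [SetLike.mem_coe, Ideal.mem_comap,
    AlgHom.toRingHom_eq_coe, RingHom.coe_coe]
  · have h : tau (12 * X 0 ^ 2 * X 1 - X 2 ^ 2) =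
        C (4:ℂ) * (3 * X 0 ^ 2 * X 1 + X 2 ^ 2) := by
      rw [map_sub, map_mul, map_mul, map_pow, map_pow, map_ofNat, tau_X0, tau_X1, tau_X2]
      rw [mul_pow, ← map_pow, show ((-2*I:ℂ))^2 = -(4:ℂ) from by
        rw [mul_pow, I_sq]; norm_num, show (C (-(4:ℂ)) : R3) = -C (4:ℂ) from by rw [map_neg],
        show (C (4:ℂ) : R3) = 4 from map_ofNat _ _]
      ring
    rw [h]
    exact Ideal.mul_mem_left _ _ (Ideal.subset_span (by left; rfl))
  · have h : tau (X 0 ^ 3 + 3 * X 1 ^ 2) = X 0 ^ 3 + 3 * X 1 ^ 2 := by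
      rw [map_add, map_mul, map_pow, map_pow, map_ofNat, tau_X0, tau_X1]
    rw [h]; exact Ideal.subset_span (by right; left; rfl)
  · have h : tau (X 0 * X 2) = C (-2*I) * (X 0 * X 2) := by
      rw [map_mul, tau_X0, tau_X2]; ring
    rw [h]
    exact Ideal.mul_mem_left _ _ (Ideal.subset_span (by right; right; rfl))

def F : (R3 ⧸ J7a) →ₐ[ℂ] (R3 ⧸ J7b) :=
  Ideal.Quotient.liftₐ J7a ((Ideal.Quotient.mkₐ ℂ J7b).comp sig) (fun a ha => by
    simpa [Ideal.Quotient.eq_zero_iff_mem] using hfmem ha)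

def G : (R3 ⧸ J7b) →ₐ[ℂ] (R3 ⧸ J7a) :=
  Ideal.Quotient.liftₐ J7b ((Ideal.Quotient.mkₐ ℂ J7a).comp tau) (fun a ha => by
    simpa [Ideal.Quotient.eq_zero_iff_mem] using hgmem ha)

lemma Fmk (p : R3) : F (Ideal.Quotient.mk J7a p) = Ideal.Quotient.mk J7b (sig p) := rfl
lemma Gmk (p : R3) : G (Ideal.Quotient.mk J7b p) = Ideal.Quotient.mk J7a (tau p) := rfl

/-- There is a `ℂ`-algebra isomorphism
`ℂ[y₁,y₂,y₃]/(3y₁²y₂+y₃², y₁³+3y₂², y₁y₃) ≅ ℂ[z₁,z₂,z₃]/(12z₁²z₂-z₃², z₁³+3z₂², z₁z₃)`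
sending `y₁ ↦ z₁`, `y₂ ↦ z₂`, `y₃ ↦ (i/2)·z₃`. -/
theorem stmt7 :
    ∃ e : (R3 ⧸ J7a) ≃ₐ[ℂ] (R3 ⧸ J7b),
      e (Ideal.Quotient.mk J7a (X 0)) = Ideal.Quotient.mk J7b (X 0) ∧
      e (Ideal.Quotient.mk J7a (X 1)) = Ideal.Quotient.mk J7b (X 1) ∧
      e (Ideal.Quotient.mk J7a (X 2)) = (I / 2) • Ideal.Quotient.mk J7b (X 2) := by
  have hFG : F.comp G = AlgHom.id ℂ (R3 ⧸ J7b) := by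
    refine Ideal.Quotient.algHom_ext ℂ (MvPolynomial.algHom_ext fun i => ?_)
    fin_cases i
    · show F (G (Ideal.Quotient.mk J7b (X 0))) = Ideal.Quotient.mk J7b (X 0)
      rw [Gmk, tau_X0, Fmk, sig_X0]
    · show F (G (Ideal.Quotient.mk J7b (X 1))) = Ideal.Quotient.mk J7b (X 1)
      rw [Gmk, tau_X1, Fmk, sig_X1]
    · show F (G (Ideal.Quotient.mk J7b (X 2))) = Ideal.Quotient.mk J7b (X 2)
      rw [Gmk, Fmk, sig_tau_X2]
  have hGF : G.comp F = AlgHom.id ℂ (R3 ⧸ J7a) := by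
    refine Ideal.Quotient.algHom_ext ℂ (MvPolynomial.algHom_ext fun i => ?_)
    fin_cases i
    · show G (F (Ideal.Quotient.mk J7a (X 0))) = Ideal.Quotient.mk J7a (X 0)
      rw [Fmk, sig_X0, Gmk, tau_X0]
    · show G (F (Ideal.Quotient.mk J7a (X 1))) = Ideal.Quotient.mk J7a (X 1)
      rw [Fmk, sig_X1, Gmk, tau_X1]
    · show G (F (Ideal.Quotient.mk J7a (X 2))) = Ideal.Quotient.mk J7a (X 2)
      rw [Fmk, Gmk, tau_sig_X2]
  refine ⟨AlgEquiv.ofAlgHom F G hFG hGF, ?_, ?_, ?_⟩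
  · rw [show ⇑(AlgEquiv.ofAlgHom F G hFG hGF) = ⇑F from rfl, Fmk, sig_X0]
  · rw [show ⇑(AlgEquiv.ofAlgHom F G hFG hGF) = ⇑F from rfl, Fmk, sig_X1]
  · rw [show ⇑(AlgEquiv.ofAlgHom F G hFG hGF) = ⇑F from rfl, Fmk, sig_X2,
      ← smul_eq_C_mul, ← Ideal.Quotient.mkₐ_eq_mk ℂ, map_smul]
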